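/- Let n, m ≥ 1 be integers. For an n × m binary array A : {0,...,n−1} × {0,...,m−1} → {0,1}, let A* be the n × m binary array whose (i,j) entry is the minimum of A over the closed grid neighbourhood of (i,j), i.e., over (i,j) together with those of (i−1,j), (i+1,j), (i,j−1), (i,j+1) that lie within the array. Let A*_{n,m} denote the set of all arrays of the form A* as A ranges over all n × m binary arrays. Then the number of digitally convex sets of P_n □ P_m equals |A*_{n,m}|. -/
import Mathlib


open SimpleGraph Classical

/-- `N[S]`: the union of closed neighbourhoods of the vertices of `S`. -/
def closedNbhd {V : Type*} (G : SimpleGraph V) (S : Set V) : Set V :=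
  ⋃ v ∈ S, insert v (G.neighborSet v)

/-- A set `S` is digitally convex in `G` if every vertex `v` with `N[v] ⊆ N[S]`
belongs to `S`. -/
def DigConvex {V : Type*} (G : SimpleGraph V) (S : Set V) : Prop :=
  ∀ v : V, insert v (G.neighborSet v) ⊆ closedNbhd G S → v ∈ S

/-- `n_D(G)`: the number of digitally convex sets of `G`. -/
noncomputable def nD {V : Type*} (G : SimpleGraph V) : ℕ :=
  Nat.card {S : Set V // DigConvex G S}

/-- The path graph `P_n` on vertices `{0, 1, …, n-1}`, with `i` adjacent to `i+1`. -/
def pathG (n : ℕ) : SimpleGraph (Fin n) :=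
  SimpleGraph.fromRel (fun i j => (i : ℕ) + 1 = (j : ℕ))

/-- The array `A*` obtained from the binary array `A` by taking, at each position,
the minimum of `A` over the closed grid neighbourhood of that position (which is
exactly the closed neighbourhood in `P_n □ P_m`): the entry is `1` iff `A` is `1`
on the whole closed neighbourhood. -/
noncomputable def arrStar (n m : ℕ) (A : Fin n × Fin m → Fin 2) : Fin n × Fin m → Fin 2 :=
  fun p => if A p = 1 ∧ ∀ q, (pathG n □ pathG m).Adj p q → A q = 1 then 1 else 0

/-- The "erosion" operator: `F G T = {v : N[v] ⊆ T}`. -/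
def eroF {V : Type*} (G : SimpleGraph V) (T : Set V) : Set V :=
  {v | insert v (G.neighborSet v) ⊆ T}

lemma closedNbhd_eroF_subset {V : Type*} (G : SimpleGraph V) (T : Set V) :
    closedNbhd G (eroF G T) ⊆ T := by
  intro u hu
  simp only [closedNbhd, Set.mem_iUnion] at hu
  obtain ⟨w, hw, hu⟩ := hu
  exact hw hu

lemma subset_eroF_closedNbhd {V : Type*} (G : SimpleGraph V) (S : Set V) :
    S ⊆ eroF G (closedNbhd G S) := by
  intro v hv u hu
  simp only [closedNbhd, Set.mem_iUnion]
  exact ⟨v, hv, hu⟩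

lemma digConvex_iff_mem_range {V : Type*} (G : SimpleGraph V) (S : Set V) :
    DigConvex G S ↔ ∃ T, eroF G T = S := by
  constructor
  · intro h
    refine ⟨closedNbhd G S, Set.Subset.antisymm ?_ (subset_eroF_closedNbhd G S)⟩
    intro v hv
    exact h v hv
  · rintro ⟨T, rfl⟩
    intro v hv
    exact fun u hu => closedNbhd_eroF_subset G T (hv hu)

theorem nD_path_boxProd_eq_card_arrStar (n m : ℕ) (hn : 1 ≤ n) (hm : 1 ≤ m) :
    nD (pathG n □ pathG m) = Nat.card (Set.range (arrStar n m)) := by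
  set G := pathG n □ pathG m
  set g : (Fin n × Fin m → Fin 2) → Set (Fin n × Fin m) := fun A => {p | A p = 1} with hg
  have hginj : Function.Injective g := by
    intro A B h
    funext p
    have hab : ∀ a b : Fin 2, (a = 1 ↔ b = 1) → a = b := by decide
    exact hab _ _ (Set.ext_iff.mp h p)
  have hkey : ∀ A, g (arrStar n m A) = eroF G (g A) := by
    intro A
    ext p
    constructor
    · intro h
      have h' : arrStar n m A p = 1 := h
      by_cases hc : A p = 1 ∧ ∀ q, G.Adj p q → A q = 1
      · intro u hu
        rcases hu with rfl | hu
        · exact hc.1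
        · exact hc.2 u hu
      · rw [arrStar, if_neg hc] at h'
        exact absurd h' (by decide)
    · intro h
      show arrStar n m A p = 1
      rw [arrStar,
        if_pos ⟨h (Set.mem_insert _ _), fun q hq => h (Set.mem_insert_of_mem _ hq)⟩]
  have himg : g '' Set.range (arrStar n m) = Set.range (eroF G) := by
    ext S
    constructor
    · rintro ⟨B, ⟨A, rfl⟩, rfl⟩
      exact ⟨g A, (hkey A).symm⟩
    · rintro ⟨T, rfl⟩
      refine ⟨arrStar n m (fun p => if p ∈ T then 1 else 0), ⟨_, rfl⟩, ?_⟩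
      rw [hkey]
      congr 1
      ext p
      simp only [hg, Set.mem_setOf_eq]
      by_cases h : p ∈ T <;> simp [h]
  have h1 : Nat.card (Set.range (arrStar n m)) = Nat.card (Set.range (eroF G)) := by
    rw [← himg]
    exact (Nat.card_image_of_injective hginj _).symm
  have h2 : {S : Set (Fin n × Fin m) | DigConvex G S} = Set.range (eroF G) := by
    ext S
    simpa [Set.mem_range] using digConvex_iff_mem_range G S
  rw [nD, h1]
  exact congrArg Nat.card (congrArg Set.Elem h2)
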